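/- Assume every bidder's valuation is monotone gross substitute. Then for every price vector p ∈ ℕ^m and every S ⊆ Ω with p_j ≥ 1 for all j ∈ S, the Lyapunov function satisfies L(p − 1_S) = L(p) + h^p(S) − |S|. -/
import Mathlib


/-- Utility of a bundle `S` at prices `p`: `v(S) - p(S)` (an integer). -/
def util {m : ℕ} (v : Finset (Fin m) → ℕ) (p : Fin m → ℕ) (S : Finset (Fin m)) : ℤ :=
  (v S : ℤ) - ∑ j ∈ S, (p j : ℤ)

/-- Demand collection: bundles of maximum utility at prices `p`. -/
def demand {m : ℕ} (v : Finset (Fin m) → ℕ) (p : Fin m → ℕ) : Finset (Finset (Fin m)) :=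
  Finset.univ.filter fun D => ∀ T : Finset (Fin m), util v p T ≤ util v p D

lemma demand_nonempty {m : ℕ} (v : Finset (Fin m) → ℕ) (p : Fin m → ℕ) :
    (demand v p).Nonempty := by
  obtain ⟨D, hD, hmax⟩ := Finset.exists_max_image (Finset.univ : Finset (Finset (Fin m)))
    (util v p) ⟨∅, Finset.mem_univ ∅⟩
  exact ⟨D, Finset.mem_filter.2 ⟨Finset.mem_univ D, fun T => hmax T (Finset.mem_univ T)⟩⟩

/-- Maximum utility of a bidder at prices `p`. -/
def uMax {m : ℕ} (v : Finset (Fin m) → ℕ) (p : Fin m → ℕ) : ℤ :=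
  Finset.univ.sup' Finset.univ_nonempty (util v p)

/-- A valuation is monotone with respect to inclusion. -/
def MonotoneVal {m : ℕ} (v : Finset (Fin m) → ℕ) : Prop :=
  ∀ ⦃S T : Finset (Fin m)⦄, S ⊆ T → v S ≤ v T

/-- Gross substitute: if `S` is demanded at `p` and `q ≥ p`, some demanded set at `q`
contains every item of `S` whose price did not change. -/
def GrossSub {m : ℕ} (v : Finset (Fin m) → ℕ) : Prop :=
  ∀ p q : Fin m → ℕ, p ≤ q → ∀ S ∈ demand v p,
    ∃ S' ∈ demand v q, ∀ j ∈ S, p j = q j → j ∈ S'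

/-- Requirement `l_p(S)` of a single bidder. -/
def req {m : ℕ} (v : Finset (Fin m) → ℕ) (p : Fin m → ℕ) (S : Finset (Fin m)) : ℕ :=
  (demand v p).inf' (demand_nonempty v p) fun D => (S ∩ D).card

/-- Redundant `h_p(S)` of a single bidder. -/
def red {m : ℕ} (v : Finset (Fin m) → ℕ) (p : Fin m → ℕ) (S : Finset (Fin m)) : ℕ :=
  (demand v p).sup' (demand_nonempty v p) fun D => (S ∩ D).card

/-- Auction requirement `l^p(S)`. -/
def reqAll {m n : ℕ} (v : Fin n → Finset (Fin m) → ℕ) (p : Fin m → ℕ) (S : Finset (Fin m)) : ℕ :=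
  ∑ i, req (v i) p S

/-- Auction redundant `h^p(S)`. -/
def redAll {m n : ℕ} (v : Fin n → Finset (Fin m) → ℕ) (p : Fin m → ℕ) (S : Finset (Fin m)) : ℕ :=
  ∑ i, red (v i) p S

/-- Lyapunov function `L(p) = Σ_i u_i(p) + Σ_j p_j`. -/
def lyap {m n : ℕ} (v : Fin n → Finset (Fin m) → ℕ) (p : Fin m → ℕ) : ℤ :=
  ∑ i, uMax (v i) p + ∑ j, (p j : ℤ)

/-- `p` is Walrasian: there is a partition of the items into demanded sets. -/
def IsWalrasian {m n : ℕ} (v : Fin n → Finset (Fin m) → ℕ) (p : Fin m → ℕ) : Prop :=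
  ∃ A : Fin n → Finset (Fin m),
    (∀ i j, i ≠ j → Disjoint (A i) (A j)) ∧
    Finset.univ.biUnion A = Finset.univ ∧
    ∀ i, A i ∈ demand (v i) p

/-- `p + 1_S`. -/
def incr {m : ℕ} (p : Fin m → ℕ) (S : Finset (Fin m)) : Fin m → ℕ :=
  fun j => if j ∈ S then p j + 1 else p j

/-- `p - 1_S`. -/
def decr {m : ℕ} (p : Fin m → ℕ) (S : Finset (Fin m)) : Fin m → ℕ :=
  fun j => if j ∈ S then p j - 1 else p j

/-- `S` is over-demanded at `p`: `l^p(S) > |S|`. -/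
def OverDemanded {m n : ℕ} (v : Fin n → Finset (Fin m) → ℕ) (p : Fin m → ℕ)
    (S : Finset (Fin m)) : Prop :=
  S.card < reqAll v p S

/-- `S` is weakly over-demanded at `p`: `l^p(S) ≥ |S|`. -/
def WeaklyOverDemanded {m n : ℕ} (v : Fin n → Finset (Fin m) → ℕ) (p : Fin m → ℕ)
    (S : Finset (Fin m)) : Prop :=
  S.card ≤ reqAll v p S

/-- `S` is under-demanded at `p`: `h^p(S) < |S|`. -/
def UnderDemanded {m n : ℕ} (v : Fin n → Finset (Fin m) → ℕ) (p : Fin m → ℕ)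
    (S : Finset (Fin m)) : Prop :=
  redAll v p S < S.card

/-- `S` is weakly under-demanded at `p`: `h^p(S) ≤ |S|`. -/
def WeaklyUnderDemanded {m n : ℕ} (v : Fin n → Finset (Fin m) → ℕ) (p : Fin m → ℕ)
    (S : Finset (Fin m)) : Prop :=
  redAll v p S ≤ S.card

/-- `S ∈ ED(p)`: `S` is over-demanded at `p` and no nonempty `T ⊆ S` is weakly
under-demanded at `p + 1_S`. -/
def ExcessDemand {m n : ℕ} (v : Fin n → Finset (Fin m) → ℕ) (p : Fin m → ℕ)
    (S : Finset (Fin m)) : Prop :=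
  OverDemanded v p S ∧
    ∀ T ⊆ S, T ≠ ∅ → ¬ WeaklyUnderDemanded v (incr p S) T

/-- `S ∈ DD(p)`: `S` is under-demanded at `p` and no nonempty `T ⊆ S` is weakly
over-demanded at `p - 1_S`. -/
def DearthDemand {m n : ℕ} (v : Fin n → Finset (Fin m) → ℕ) (p : Fin m → ℕ)
    (S : Finset (Fin m)) : Prop :=
  UnderDemanded v p S ∧
    ∀ T ⊆ S, T ≠ ∅ → ¬ WeaklyOverDemanded v (decr p S) T

/-- `S` is a minimal minimizer for `p`. -/
def MinimalMinimizer {m n : ℕ} (v : Fin n → Finset (Fin m) → ℕ) (p : Fin m → ℕ)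
    (S : Finset (Fin m)) : Prop :=
  lyap v (incr p S) < lyap v p ∧
    (∀ T : Finset (Fin m), lyap v (incr p S) ≤ lyap v (incr p T)) ∧
    ∀ T : Finset (Fin m), T ⊂ S → lyap v (incr p S) < lyap v (incr p T)

/-- `S` is a maximal minimizer for `p`. -/
def MaximalMinimizer {m n : ℕ} (v : Fin n → Finset (Fin m) → ℕ) (p : Fin m → ℕ)
    (S : Finset (Fin m)) : Prop :=
  lyap v (decr p S) < lyap v p ∧
    (∀ T : Finset (Fin m), lyap v (decr p S) ≤ lyap v (decr p T)) ∧
    ∀ T : Finset (Fin m), T ⊂ S → lyap v (decr p S) < lyap v (decr p T)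
lemma util_le_uMax' {m : ℕ} (v : Finset (Fin m) → ℕ) (p : Fin m → ℕ) (T : Finset (Fin m)) :
    util v p T ≤ uMax v p :=
  Finset.le_sup' _ (Finset.mem_univ T)

lemma uMax_eq_of_mem' {m : ℕ} {v : Finset (Fin m) → ℕ} {p : Fin m → ℕ} {D : Finset (Fin m)}
    (h : D ∈ demand v p) : uMax v p = util v p D := by
  rw [demand, Finset.mem_filter] at h
  exact le_antisymm (Finset.sup'_le _ _ fun T _ => h.2 T) (util_le_uMax' v p D)

lemma mem_demand_of_eq' {m : ℕ} {v : Finset (Fin m) → ℕ} {p : Fin m → ℕ} {D : Finset (Fin m)}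
    (h : util v p D = uMax v p) : D ∈ demand v p :=
  Finset.mem_filter.2 ⟨Finset.mem_univ _, fun T => h ▸ util_le_uMax' v p T⟩

lemma util_incr' {m : ℕ} (v : Finset (Fin m) → ℕ) (r : Fin m → ℕ) (S T : Finset (Fin m)) :
    util v (incr r S) T = util v r T - ((S ∩ T).card : ℤ) := by
  unfold util incr
  have h1 : ∑ j ∈ T, ((if j ∈ S then r j + 1 else r j : ℕ) : ℤ)
      = ∑ j ∈ T, ((r j : ℤ) + if j ∈ S then 1 else 0) := by
    refine Finset.sum_congr rfl fun j _ => ?_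
    split <;> simp
  rw [h1, Finset.sum_add_distrib]
  have h2 : ∑ j ∈ T, (if j ∈ S then (1:ℤ) else 0) = ((S ∩ T).card : ℤ) := by
    rw [← Finset.sum_filter, Finset.sum_const, Finset.filter_mem_eq_inter,
      Finset.inter_comm]
    simp
  rw [h2]; ring

lemma keyB' {m : ℕ} (v : Finset (Fin m) → ℕ) (hv : GrossSub v) (S : Finset (Fin m)) :
    ∀ r : Fin m → ℕ, ∀ T ∈ demand v r, ∃ D ∈ demand v (incr r S),
      T \ S ⊆ D ∧ uMax v r - uMax v (incr r S) ≤ ((S ∩ D).card : ℤ) := by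
  induction S using Finset.induction_on with
  | empty =>
    intro r T hT
    have h0 : incr r ∅ = r := by funext k; simp [incr]
    rw [h0]
    exact ⟨T, hT, by simp, by simp⟩
  | @insert j S' hj ih =>
    intro r T hT
    set r₁ := incr r ({j} : Finset (Fin m)) with hr₁
    have hsplit : incr r (insert j S') = incr r₁ S' := by
      funext k
      by_cases h1 : k = j <;> by_cases h2 : k ∈ S' <;>
        simp [incr, r₁, h1, h2, hj]
    have hle : r ≤ r₁ := fun k => by by_cases h : k ∈ ({j} : Finset (Fin m)) <;> simp [incr, r₁, h]
    have hutil1 : ∀ X : Finset (Fin m), util v r₁ X = util v r X - (if j ∈ X then (1:ℤ) else 0) := by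
      intro X
      rw [hr₁, util_incr']
      by_cases h : j ∈ X
      · rw [Finset.singleton_inter_of_mem h]; simp [h]
      · rw [Finset.singleton_inter_of_notMem h]; simp [h]
    rw [hsplit]
    by_cases ha : ∃ T₀ ∈ demand v r, j ∉ T₀
    · -- uMax unchanged
      obtain ⟨T₀, hT₀, hjT₀⟩ := ha
      have huM : uMax v r₁ = uMax v r := by
        apply le_antisymm
        · apply Finset.sup'_le
          intro X _
          rw [hutil1]
          have := util_le_uMax' v r X
          split <;> omega
        · have : util v r₁ T₀ = uMax v r := by
            rw [hutil1, if_neg hjT₀, ← uMax_eq_of_mem' hT₀]; ring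
          rw [← this]; exact util_le_uMax' v r₁ T₀
      -- get T₁ ∈ demand v r₁ with T \ {j} ⊆ T₁
      obtain ⟨T₁, hT₁, hsub⟩ : ∃ T₁ ∈ demand v r₁, T \ {j} ⊆ T₁ := by
        by_cases hjT : j ∈ T
        · obtain ⟨T₁, hT₁, hkeep⟩ := hv r r₁ hle T hT
          refine ⟨T₁, hT₁, fun k hk => ?_⟩
          simp only [Finset.mem_sdiff, Finset.mem_singleton] at hk
          refine hkeep k hk.1 ?_
          simp [incr, r₁, hk.2]
        · refine ⟨T, ?_, Finset.sdiff_subset⟩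
          apply mem_demand_of_eq'
          rw [hutil1, if_neg hjT, huM, ← uMax_eq_of_mem' hT]; ring
      obtain ⟨D, hD, hDsub, hDcard⟩ := ih r₁ T₁ hT₁
      refine ⟨D, hD, ?_, ?_⟩
      · intro k hk
        simp only [Finset.mem_sdiff, Finset.mem_insert, not_or] at hk
        apply hDsub
        rw [Finset.mem_sdiff]
        refine ⟨hsub ?_, hk.2.2⟩
        rw [Finset.mem_sdiff, Finset.mem_singleton]
        exact ⟨hk.1, hk.2.1⟩
      · have hmono : ((S' ∩ D).card : ℤ) ≤ ((insert j S' ∩ D).card : ℤ) := by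
          exact_mod_cast Finset.card_le_card
            (Finset.inter_subset_inter (Finset.subset_insert j S') le_rfl)
        omega
    · -- all demanded sets contain j; uMax drops by 1
      push_neg at ha
      have hjT : j ∈ T := ha T hT
      have huM : uMax v r₁ = uMax v r - 1 := by
        apply le_antisymm
        · apply Finset.sup'_le
          intro X _
          rw [hutil1]
          by_cases h : j ∈ X
          · have := util_le_uMax' v r X
            simp [h]; omega
          · have hne : util v r X ≠ uMax v r := by
              intro heq
              exact h (ha X (mem_demand_of_eq' heq))
            have := util_le_uMax' v r X
            simp [h]; omega
        · have : util v r₁ T = uMax v r - 1 := by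
            rw [hutil1, if_pos hjT, ← uMax_eq_of_mem' hT]
          rw [← this]; exact util_le_uMax' v r₁ T
      have hT₁ : T ∈ demand v r₁ := by
        apply mem_demand_of_eq'
        rw [hutil1, if_pos hjT, huM, ← uMax_eq_of_mem' hT]
      obtain ⟨D, hD, hDsub, hDcard⟩ := ih r₁ T hT₁
      have hjD : j ∈ D := hDsub (Finset.mem_sdiff.2 ⟨hjT, hj⟩)
      refine ⟨D, hD, ?_, ?_⟩
      · intro k hk
        simp only [Finset.mem_sdiff, Finset.mem_insert, not_or] at hk
        exact hDsub (Finset.mem_sdiff.2 ⟨hk.1, hk.2.2⟩)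
      · have hcard : (insert j S' ∩ D).card = (S' ∩ D).card + 1 := by
          rw [Finset.insert_inter_of_mem hjD,
            Finset.card_insert_of_notMem (fun h => hj (Finset.mem_inter.1 h).1)]
        rw [hcard]
        push_cast
        omega

lemma uMax_incr_eq' {m : ℕ} (v : Finset (Fin m) → ℕ) (hv : GrossSub v) (q : Fin m → ℕ)
    (S : Finset (Fin m)) :
    uMax v q = uMax v (incr q S) + ((red v (incr q S) S : ℕ) : ℤ) := by
  apply le_antisymm
  · obtain ⟨T, hT⟩ := demand_nonempty v q
    obtain ⟨D, hD, _, hcard⟩ := keyB' v hv S q T hT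
    have hred : ((S ∩ D).card : ℤ) ≤ ((red v (incr q S) S : ℕ) : ℤ) := by
      rw [red]; exact_mod_cast Finset.le_sup' (fun D => (S ∩ D).card) hD
    omega
  · obtain ⟨D, hD, hDval⟩ := Finset.exists_mem_eq_sup' (demand_nonempty v (incr q S))
      (fun D => (S ∩ D).card)
    have h1 : util v (incr q S) D = util v q D - ((S ∩ D).card : ℤ) := util_incr' v q S D
    have h2 : uMax v (incr q S) = util v (incr q S) D := uMax_eq_of_mem' hD
    have h3 : util v q D ≤ uMax v q := util_le_uMax' v q D
    rw [red, hDval]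
    omega

theorem stmt2 {m n : ℕ} (v : Fin n → Finset (Fin m) → ℕ)
    (hzero : ∀ i, v i ∅ = 0) (hmono : ∀ i, MonotoneVal (v i))
    (hgs : ∀ i, GrossSub (v i))
    (p : Fin m → ℕ) (S : Finset (Fin m)) (hpos : ∀ j ∈ S, 1 ≤ p j) :
    lyap v (decr p S) = lyap v p + (redAll v p S : ℤ) - (S.card : ℤ) := by
  set q := decr p S with hq
  have hqp : incr q S = p := by
    funext k
    by_cases h : k ∈ S
    · have := hpos k h
      simp [incr, decr, q, h]
      omega
    · simp [incr, decr, q, h]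
  have hbidder : ∀ i, uMax (v i) q = uMax (v i) p + ((red (v i) p S : ℕ) : ℤ) := by
    intro i
    have := uMax_incr_eq' (v i) (hgs i) q S
    rwa [hqp] at this
  have hsum : ∑ j, ((q j : ℕ) : ℤ) = ∑ j, ((p j : ℕ) : ℤ) - (S.card : ℤ) := by
    have : ∀ j : Fin m, ((q j : ℕ) : ℤ) = (p j : ℤ) - (if j ∈ S then (1:ℤ) else 0) := by
      intro j
      by_cases h : j ∈ S
      · have := hpos j h; simp [q, decr, h]; omega
      · simp [q, decr, h]
    rw [Finset.sum_congr rfl fun j _ => this j, Finset.sum_sub_distrib,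
      ← Finset.sum_filter, Finset.sum_const, Finset.filter_mem_eq_inter]
    simp [Finset.univ_inter]
  rw [lyap, lyap, redAll]
  rw [Finset.sum_congr rfl fun i _ => hbidder i, Finset.sum_add_distrib, hsum]
  push_cast
  ring
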